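/- arXiv:2503.06230 — 4 statements merged into one kernel-verified Lean document; each statement's English description precedes it below -/
import Mathlib

section
/- Let L be a Lie ring and K ≤ H ≤ L subrings such that C_L(K^i) = C_L(H^i) for all i < j. Then C_L^j(K) = C_L^j(H). -/
/-- The set-theoretic normalizer of a subset of a Lie ring. -/
def setNormalizer {L : Type*} [LieRing L] (S : Set L) : Set L :=
  {x | ∀ s ∈ S, ⁅x, s⁆ ∈ S}

/-- Iterated centralizers `C_L^n(A)`: `C^0 = 0` and
`C^{n+1} = {x ∈ ⋂_{1 ≤ i ≤ n} N_L(C^i) : [x, A] ⊆ C^n}`. -/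
def iterCent {L : Type*} [LieRing L] (A : Set L) : ℕ → Set L
  | 0 => {0}
  | n + 1 =>
      {x | (∀ i, 1 ≤ i → i ≤ n → x ∈ setNormalizer (iterCent A i)) ∧
        ∀ a ∈ A, ⁅x, a⁆ ∈ iterCent A n}

/-- `[X,Y]`: the additive subgroup generated by brackets. -/
def bracketSpan {L : Type*} [LieRing L] (X Y : Set L) : AddSubgroup L :=
  AddSubgroup.closure {z | ∃ x ∈ X, ∃ y ∈ Y, z = ⁅x, y⁆}

/-- Lower central series of a subset: `X^0 = ⟨X⟩`, `X^{n+1} = [X, X^n]`. -/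
def lcsSet {L : Type*} [LieRing L] (X : Set L) : ℕ → AddSubgroup L
  | 0 => AddSubgroup.closure X
  | n + 1 => bracketSpan X (lcsSet X n)

/-- The centralizer of a subset of a Lie ring. -/
def setCent {L : Type*} [LieRing L] (X : Set L) : Set L :=
  {y | ∀ x ∈ X, ⁅y, x⁆ = 0}


section Aux
variable {L : Type*} [LieRing L]

lemma iterCent_zero_eq (A : Set L) : iterCent A 0 = {0} := by rw [iterCent]

lemma mem_iterCent_zero {A : Set L} {x : L} : x ∈ iterCent A 0 ↔ x = 0 := by
  rw [iterCent_zero_eq]; exact Set.mem_singleton_iff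

lemma mem_iterCent_succ {A : Set L} {n : ℕ} {x : L} :
    x ∈ iterCent A (n + 1) ↔
      (∀ i, 1 ≤ i → i ≤ n → ∀ s ∈ iterCent A i, ⁅x, s⁆ ∈ iterCent A i) ∧
        ∀ a ∈ A, ⁅x, a⁆ ∈ iterCent A n := by
  rw [iterCent]; exact Iff.rfl

lemma iterCent_norm {A : Set L} {n : ℕ} {x : L} (hx : x ∈ iterCent A (n + 1)) :
    ∀ i, 1 ≤ i → i ≤ n → ∀ s ∈ iterCent A i, ⁅x, s⁆ ∈ iterCent A i :=
  (mem_iterCent_succ.mp hx).1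

lemma iterCent_lie {A : Set L} {n : ℕ} {x : L} (hx : x ∈ iterCent A (n + 1)) :
    ∀ a ∈ A, ⁅x, a⁆ ∈ iterCent A n :=
  (mem_iterCent_succ.mp hx).2

lemma iterCent_subgroup (A : Set L) (n : ℕ) :
    (0 : L) ∈ iterCent A n ∧
      (∀ x ∈ iterCent A n, ∀ y ∈ iterCent A n, x + y ∈ iterCent A n) ∧
      (∀ x ∈ iterCent A n, -x ∈ iterCent A n) := by
  induction n using Nat.strong_induction_on with
  | _ n IH =>
    match n with
    | 0 =>
      refine ⟨mem_iterCent_zero.mpr rfl, ?_, ?_⟩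
      · intro x hx y hy
        rw [mem_iterCent_zero] at *
        simp [hx, hy]
      · intro x hx
        rw [mem_iterCent_zero] at *
        simp [hx]
    | n + 1 =>
      refine ⟨mem_iterCent_succ.mpr ⟨fun i h1 h2 s hs => ?_, fun a ha => ?_⟩, ?_, ?_⟩
      · rw [zero_lie]; exact (IH i (by omega)).1
      · rw [zero_lie]; exact (IH n (by omega)).1
      · intro x hx y hy
        obtain ⟨hx1, hx2⟩ := mem_iterCent_succ.mp hx
        obtain ⟨hy1, hy2⟩ := mem_iterCent_succ.mp hy
        refine mem_iterCent_succ.mpr ⟨fun i h1 h2 s hs => ?_, fun a ha => ?_⟩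
        · rw [add_lie]
          exact (IH i (by omega)).2.1 _ (hx1 i h1 h2 s hs) _ (hy1 i h1 h2 s hs)
        · rw [add_lie]
          exact (IH n (by omega)).2.1 _ (hx2 a ha) _ (hy2 a ha)
      · intro x hx
        obtain ⟨hx1, hx2⟩ := mem_iterCent_succ.mp hx
        refine mem_iterCent_succ.mpr ⟨fun i h1 h2 s hs => ?_, fun a ha => ?_⟩
        · rw [neg_lie]
          exact (IH i (by omega)).2.2 _ (hx1 i h1 h2 s hs)
        · rw [neg_lie]
          exact (IH n (by omega)).2.2 _ (hx2 a ha)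

lemma zero_mem_iterCent (A : Set L) (n : ℕ) : (0 : L) ∈ iterCent A n :=
  (iterCent_subgroup A n).1

lemma add_mem_iterCent {A : Set L} {n : ℕ} {x y : L} (hx : x ∈ iterCent A n)
    (hy : y ∈ iterCent A n) : x + y ∈ iterCent A n :=
  (iterCent_subgroup A n).2.1 x hx y hy

lemma neg_mem_iterCent {A : Set L} {n : ℕ} {x : L} (hx : x ∈ iterCent A n) :
    -x ∈ iterCent A n :=
  (iterCent_subgroup A n).2.2 x hx

lemma sub_mem_iterCent {A : Set L} {n : ℕ} {x y : L} (hx : x ∈ iterCent A n)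
    (hy : y ∈ iterCent A n) : x - y ∈ iterCent A n := by
  rw [sub_eq_add_neg]; exact add_mem_iterCent hx (neg_mem_iterCent hy)

/-- extend bracketing into `iterCent` over an additive closure -/
lemma lie_mem_iterCent_closure {A S : Set L} {n : ℕ} {x : L}
    (h : ∀ s ∈ S, ⁅x, s⁆ ∈ iterCent A n) {y : L} (hy : y ∈ AddSubgroup.closure S) :
    ⁅x, y⁆ ∈ iterCent A n := by
  induction hy using AddSubgroup.closure_induction with
  | mem s hs => exact h s hs
  | zero => simpa using zero_mem_iterCent A n
  | add a b ha hb pa pb => rw [lie_add]; exact add_mem_iterCent pa pb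
  | neg a ha pa => rw [lie_neg]; exact neg_mem_iterCent pa

/-- normalizing gives brackets staying in lower iterated centralizers (incl. `i = 0`). -/
lemma lie_mem_of_norm {A : Set L} {m i : ℕ} (hi : i ≤ m) {y d : L}
    (hy : y ∈ iterCent A (m + 1)) (hd : d ∈ iterCent A i) : ⁅y, d⁆ ∈ iterCent A i := by
  rcases Nat.eq_zero_or_pos i with rfl | h1
  · rw [mem_iterCent_zero] at hd ⊢
    simp [hd]
  · exact iterCent_norm hy i h1 hi d hd

/-- `[C^r, C^r] ⊆ C^r`. -/
lemma lie_mem_iterCent_self {A : Set L} {r : ℕ} {x c : L}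
    (hx : x ∈ iterCent A r) (hc : c ∈ iterCent A r) : ⁅x, c⁆ ∈ iterCent A r := by
  match r with
  | 0 =>
    rw [mem_iterCent_zero] at hx ⊢
    simp [hx]
  | m + 1 =>
    refine mem_iterCent_succ.mpr ⟨fun i h1 h2 d hd => ?_, fun a ha => ?_⟩
    · rw [lie_lie]
      exact sub_mem_iterCent
        (lie_mem_of_norm h2 hx (lie_mem_of_norm h2 hc hd))
        (lie_mem_of_norm h2 hc (lie_mem_of_norm h2 hx hd))
    · rw [lie_lie]
      exact sub_mem_iterCent
        (lie_mem_of_norm le_rfl hx (iterCent_lie hc a ha))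
        (lie_mem_of_norm le_rfl hc (iterCent_lie hx a ha))

lemma iterCent_mono_succ (A : Set L) (n : ℕ) : iterCent A n ⊆ iterCent A (n + 1) := by
  induction n with
  | zero =>
    intro x hx
    rw [mem_iterCent_zero] at hx
    subst hx
    exact zero_mem_iterCent A 1
  | succ n IH =>
    intro x hx
    refine mem_iterCent_succ.mpr
      ⟨fun i h1 h2 s hs => ?_, fun a ha => IH (iterCent_lie hx a ha)⟩
    rcases Nat.lt_or_ge i (n + 1) with h | h
    · exact iterCent_norm hx i h1 (by omega) s hs
    · have : i = n + 1 := by omega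
      subst this
      exact lie_mem_iterCent_self hx hs

lemma iterCent_le {A : Set L} {n m : ℕ} (h : n ≤ m) : iterCent A n ⊆ iterCent A m := by
  induction m with
  | zero =>
    obtain rfl : n = 0 := Nat.le_zero.mp h
    exact fun _ h => h
  | succ m IH =>
    rcases Nat.lt_or_ge n (m + 1) with h' | h'
    · exact fun x hx => iterCent_mono_succ A m (IH (by omega) hx)
    · obtain rfl : n = m + 1 := by omega
      exact fun _ h => h

/-- `[C^{m+i+1}(A), A^i] ⊆ C^m(A)`. -/
lemma claimK (A : Set L) : ∀ i m (x : L), x ∈ iterCent A (m + i + 1) →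
    ∀ w ∈ lcsSet A i, ⁅x, w⁆ ∈ iterCent A m := by
  intro i
  induction i with
  | zero =>
    intro m x hx w hw
    exact lie_mem_iterCent_closure (fun a ha => iterCent_lie hx a ha) hw
  | succ i IH =>
    intro m x hx w hw
    refine lie_mem_iterCent_closure (fun z hz => ?_) hw
    obtain ⟨a, ha, v, hv, rfl⟩ := hz
    rw [leibniz_lie]
    have hxa : ⁅x, a⁆ ∈ iterCent A (m + i + 1) := iterCent_lie hx a ha
    have h1 : ⁅⁅x, a⁆, v⁆ ∈ iterCent A m := IH m _ hxa v hv
    have hx' : x ∈ iterCent A ((m + 1) + i + 1) := by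
      have e : m + (i + 1) + 1 = (m + 1) + i + 1 := by omega
      rw [e] at hx; exact hx
    have hxv : ⁅x, v⁆ ∈ iterCent A (m + 1) := IH (m + 1) _ hx' v hv
    have h2 : ⁅a, ⁅x, v⁆⁆ ∈ iterCent A m := by
      rw [← lie_skew]
      exact neg_mem_iterCent (iterCent_lie hxv a ha)
    exact add_mem_iterCent h1 h2

lemma lcsSet_antitone_succ (H : LieSubalgebra ℤ L) (i : ℕ) :
    lcsSet (H : Set L) (i + 1) ≤ lcsSet (H : Set L) i := by
  induction i with
  | zero =>
    refine AddSubgroup.closure_le _ |>.mpr ?_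
    rintro z ⟨h, hh, y, hy, rfl⟩
    change y ∈ AddSubgroup.closure (H : Set L) at hy
    induction hy using AddSubgroup.closure_induction with
    | mem s hs => exact AddSubgroup.subset_closure (H.lie_mem hh hs)
    | zero => simpa using AddSubgroup.zero_mem (lcsSet (H : Set L) 0)
    | add a b ha hb pa pb => rw [lie_add]; exact AddSubgroup.add_mem _ pa pb
    | neg a ha pa => rw [lie_neg]; exact AddSubgroup.neg_mem _ pa
  | succ i IH =>
    refine AddSubgroup.closure_le _ |>.mpr ?_
    rintro z ⟨h, hh, y, hy, rfl⟩
    exact AddSubgroup.subset_closure ⟨h, hh, y, IH hy, rfl⟩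

lemma lcsSet_antitone (H : LieSubalgebra ℤ L) {i i' : ℕ} (h : i' ≤ i) :
    lcsSet (H : Set L) i ≤ lcsSet (H : Set L) i' := by
  induction i with
  | zero =>
    obtain rfl : i' = 0 := Nat.le_zero.mp h
    exact le_rfl
  | succ i IH =>
    rcases Nat.lt_or_ge i' (i + 1) with h' | h'
    · exact le_trans (lcsSet_antitone_succ H i) (IH (by omega))
    · obtain rfl : i' = i + 1 := by omega
      exact le_rfl

/-- `[C^{t+u+1}(K), H^u] ⊆ C^t(K)` given the centralizer hypotheses. -/
lemma claimH (K H : LieSubalgebra ℤ L) (hKH : K ≤ H) (j : ℕ)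
    (hc : ∀ i < j, setCent (lcsSet (K : Set L) i : Set L) =
      setCent (lcsSet (H : Set L) i : Set L)) :
    ∀ t u (x w : L), t + u + 1 ≤ j → x ∈ iterCent (K : Set L) (t + u + 1) →
      w ∈ lcsSet (H : Set L) u → ⁅x, w⁆ ∈ iterCent (K : Set L) t := by
  intro t
  induction t using Nat.strong_induction_on with
  | _ t IH =>
    cases t with
    | zero =>
      intro u x w hle hx hw
      have hxc : x ∈ setCent (lcsSet (K : Set L) u : Set L) := by
        intro w' hw'
        exact mem_iterCent_zero.mp (claimK (K : Set L) u 0 x hx w' hw')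
      rw [hc u (by omega)] at hxc
      exact mem_iterCent_zero.mpr (hxc w hw)
    | succ t =>
      intro u x w hle hx hw
      have hx' : x ∈ iterCent (K : Set L) ((t + u + 1) + 1) := by
        have e : (t + 1) + u + 1 = (t + u + 1) + 1 := by omega
        rw [e] at hx; exact hx
      have G : ∀ s, 1 ≤ s → s ≤ t → ∀ u' (y : L), y ∈ iterCent (K : Set L) s →
          ∀ v ∈ lcsSet (H : Set L) u', ⁅y, v⁆ ∈ iterCent (K : Set L) s := by
        intro s hs1 hst u' y hy v hv
        have hv' : v ∈ lcsSet (H : Set L) (min u' (s - 1)) :=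
          lcsSet_antitone H (by omega) hv
        have hy' : y ∈ iterCent (K : Set L) ((s - 1 - min u' (s - 1)) + min u' (s - 1) + 1) := by
          have e : (s - 1 - min u' (s - 1)) + min u' (s - 1) + 1 = s := by omega
          rw [e]; exact hy
        have h := IH (s - 1 - min u' (s - 1)) (by omega) (min u' (s - 1)) y v (by omega) hy' hv'
        exact iterCent_le (by omega) h
      refine mem_iterCent_succ.mpr ⟨fun s hs1 hst c hcmem => ?_, fun a ha => ?_⟩
      · rw [lie_lie]
        have hxc : ⁅x, c⁆ ∈ iterCent (K : Set L) s := lie_mem_of_norm (by omega) hx' hcmem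
        have t2 : ⁅⁅x, c⁆, w⁆ ∈ iterCent (K : Set L) s := G s hs1 hst u _ hxc w hw
        have hcw : ⁅c, w⁆ ∈ iterCent (K : Set L) s := G s hs1 hst u c hcmem w hw
        have t1 : ⁅x, ⁅w, c⁆⁆ ∈ iterCent (K : Set L) s := by
          have hwc : ⁅w, c⁆ ∈ iterCent (K : Set L) s := by
            rw [← lie_skew]; exact neg_mem_iterCent hcw
          exact lie_mem_of_norm (by omega) hx' hwc
        have t2' : ⁅w, ⁅x, c⁆⁆ ∈ iterCent (K : Set L) s := by
          rw [← lie_skew]; exact neg_mem_iterCent t2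
        exact sub_mem_iterCent t1 t2'
      · rw [lie_lie]
        have haH : a ∈ (H : Set L) := hKH ha
        have hkw : ⁅a, w⁆ ∈ lcsSet (H : Set L) (u + 1) :=
          AddSubgroup.subset_closure ⟨a, haH, w, hw, rfl⟩
        have hwk : ⁅w, a⁆ ∈ lcsSet (H : Set L) (u + 1) := by
          rw [← lie_skew]; exact AddSubgroup.neg_mem _ hkw
        have hx'' : x ∈ iterCent (K : Set L) (t + (u + 1) + 1) := by
          have e : t + (u + 1) + 1 = (t + u + 1) + 1 := by omega
          rw [e]; exact hx'
        have t1 : ⁅x, ⁅w, a⁆⁆ ∈ iterCent (K : Set L) t :=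
          IH t (by omega) (u + 1) x _ (by omega) hx'' hwk
        have hxa : ⁅x, a⁆ ∈ iterCent (K : Set L) (t + u + 1) := iterCent_lie hx' a ha
        have t2 : ⁅⁅x, a⁆, w⁆ ∈ iterCent (K : Set L) t :=
          IH t (by omega) u _ w (by omega) hxa hw
        have t2' : ⁅w, ⁅x, a⁆⁆ ∈ iterCent (K : Set L) t := by
          rw [← lie_skew]; exact neg_mem_iterCent t2
        exact sub_mem_iterCent t1 t2'

end Aux

/-- If `K ≤ H ≤ L` are subrings with `C_L(K^i) = C_L(H^i)` for all `i < j`,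
then `C_L^j(K) = C_L^j(H)`. -/
theorem iterCent_eq_of_centralizer_lcs_eq {L : Type*} [LieRing L]
    (K H : LieSubalgebra ℤ L) (hKH : K ≤ H) (j : ℕ)
    (hc : ∀ i < j, setCent (lcsSet (K : Set L) i : Set L) =
      setCent (lcsSet (H : Set L) i : Set L)) :
    iterCent (K : Set L) j = iterCent (H : Set L) j := by
  revert hc
  induction j using Nat.strong_induction_on with
  | _ j IH =>
    intro hc
    cases j with
    | zero => simp [iterCent_zero_eq]
    | succ n =>
      have IHeq : ∀ i, i ≤ n → iterCent (K : Set L) i = iterCent (H : Set L) i := by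
        intro i hi
        exact IH i (by omega) (fun i' hi' => hc i' (by omega))
      ext x
      rw [mem_iterCent_succ, mem_iterCent_succ]
      constructor
      · rintro ⟨hx1, hx2⟩
        refine ⟨fun i h1 h2 => ?_, fun a ha => ?_⟩
        · rw [← IHeq i h2]
          exact hx1 i h1 h2
        · rw [← IHeq n le_rfl]
          have hx : x ∈ iterCent (K : Set L) (n + 1) := mem_iterCent_succ.mpr ⟨hx1, hx2⟩
          exact claimH K H hKH (n + 1) hc n 0 x a (by omega) hx
            (AddSubgroup.subset_closure ha)
      · rintro ⟨hx1, hx2⟩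
        refine ⟨fun i h1 h2 => ?_, fun a ha => ?_⟩
        · rw [IHeq i h2]
          exact hx1 i h1 h2
        · rw [IHeq n le_rfl]
          exact hx2 a (hKH ha)
end

section
/- A Lie ring satisfying the minimal and maximal chain conditions on centralizers is Z_f: for every iterated center Z_n(L), the center of L/Z_n(L) equals the centralizer of finitely many elements. -/
/-- A Lie ring is `M_c` if it has no infinite strictly descending and no
infinite strictly ascending chain of centralizers. -/
def IsMc (L : Type*) [LieRing L] : Prop :=
  (¬ ∃ f : ℕ → Set L, (∀ n, ∃ X : Set L, f n = setCent X) ∧ ∀ n, f (n + 1) ⊂ f n) ∧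
  (¬ ∃ f : ℕ → Set L, (∀ n, ∃ X : Set L, f n = setCent X) ∧ ∀ n, f n ⊂ f (n + 1))

/-- The `n`-th iterated center `Z_n(L)` of a Lie ring. -/
def iterCenter (L : Type*) [LieRing L] (n : ℕ) : LieIdeal ℤ L :=
  LieSubmodule.ucs n ⊥

section Aux

variable {L : Type*} [LieRing L]

lemma mem_iter_succ (k : ℕ) (z : L) :
    z ∈ iterCenter L (k + 1) ↔ ∀ x : L, ⁅z, x⁆ ∈ iterCenter L k := by
  rw [iterCenter, LieSubmodule.ucs_succ, LieSubmodule.mem_normalizer]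
  constructor
  · intro h x
    rw [show ⁅z, x⁆ = -⁅x, z⁆ from (lie_skew z x).symm]
    exact neg_mem (h x)
  · intro h x
    rw [show ⁅x, z⁆ = -⁅z, x⁆ from (lie_skew x z).symm]
    exact neg_mem (h x)

lemma setCent_antitone {X Y : Set L} (h : X ⊆ Y) : setCent Y ⊆ setCent X :=
  fun _ hy x hx => hy x (h hx)

lemma mem_iter_zero (z : L) : z ∈ iterCenter L 0 ↔ z = 0 := by
  rw [iterCenter, LieSubmodule.ucs_zero, LieSubmodule.mem_bot]

/-- Iterated bracket `[[…[y,l₁],l₂…],lₘ]`. -/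
def itb (y : L) (l : List L) : L := l.foldl (fun a b => ⁅a, b⁆) y

@[simp] lemma itb_nil (y : L) : itb y [] = y := rfl

@[simp] lemma itb_cons (y a : L) (l : List L) : itb y (a :: l) = itb ⁅y, a⁆ l := rfl

@[simp] lemma itb_append_singleton (y a : L) (l : List L) :
    itb y (l ++ [a]) = ⁅itb y l, a⁆ := by
  simp [itb]

/-- `[Z_{|l|+r+1}, (iterated brackets along l)] ⊆ Z_r`. -/
lemma brkt_mem : ∀ (l : List L) (x z : L) (r : ℕ),
    z ∈ iterCenter L (l.length + r + 1) → ⁅z, itb x l⁆ ∈ iterCenter L r := by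
  intro l
  induction l using List.reverseRecOn with
  | nil =>
    intro x z r hz
    have hz' : z ∈ iterCenter L (r + 1) := by simpa using hz
    exact (mem_iter_succ r z).mp hz' x
  | append_singleton l a ih =>
    intro x z r hz
    have hz' : z ∈ iterCenter L (l.length + (r + 1) + 1) := by
      have : l.length + (r + 1) + 1 = (l ++ [a]).length + r + 1 := by simp; omega
      rwa [this]
    set v := itb x l with hv
    have e : ⁅z, ⁅v, a⁆⁆ = ⁅⁅z, v⁆, a⁆ - ⁅⁅z, a⁆, v⁆ := by
      rw [leibniz_lie, ← lie_skew ⁅z, a⁆ v]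
      abel
    rw [itb_append_singleton, e]
    refine sub_mem ?_ ?_
    · exact (mem_iter_succ r ⁅z, v⁆).mp (ih x z (r + 1) hz') a
    · refine ih x ⁅z, a⁆ r ?_
      exact (mem_iter_succ (l.length + r + 1) z).mp (by rwa [show l.length + (r+1) + 1 = (l.length + r + 1) + 1 by omega] at hz') a

/-- Jacobi commutation up to lower central terms. -/
lemma key_congr {n : ℕ} {y : L} :
    ∀ l : List L, (∀ a ∈ l, ⁅y, a⁆ ∈ iterCenter L n) →
      ∀ (x : L) (r : ℕ), l.length + r = n →
        itb ⁅y, x⁆ l - ⁅y, itb x l⁆ ∈ iterCenter L r := by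
  intro l
  induction l using List.reverseRecOn with
  | nil =>
    intro _ x r _
    simp
  | append_singleton l a ih =>
    intro hmem x r hr
    have hlr : l.length + (r + 1) = n := by
      simp only [List.length_append, List.length_singleton] at hr; omega
    have hD := ih (fun b hb => hmem b (List.mem_append_left _ hb)) x (r + 1) hlr
    have ha : ⁅y, a⁆ ∈ iterCenter L n := hmem a (by simp)
    set v := itb x l with hv
    have jac : ⁅⁅y, v⁆, a⁆ - ⁅y, ⁅v, a⁆⁆ = ⁅⁅y, a⁆, v⁆ := by
      have h1 : ⁅y, ⁅v, a⁆⁆ = ⁅⁅y, v⁆, a⁆ + ⁅v, ⁅y, a⁆⁆ := leibniz_lie y v a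
      rw [h1, ← lie_skew ⁅y, a⁆ v]
      abel
    have goal_eq : itb ⁅y, x⁆ (l ++ [a]) - ⁅y, itb x (l ++ [a])⁆
        = ⁅itb ⁅y, x⁆ l - ⁅y, v⁆, a⁆ + ⁅⁅y, a⁆, v⁆ := by
      rw [itb_append_singleton, itb_append_singleton, sub_lie, ← jac]
      abel
    rw [goal_eq]
    refine add_mem ?_ ?_
    · exact (mem_iter_succ r _).mp hD a
    · exact brkt_mem l x ⁅y, a⁆ r (by rwa [show l.length + r + 1 = n by omega])

end Aux

section Chain

variable {L : Type*} [LieRing L]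

/-- From the descending chain condition: every centralizer of a range is the
centralizer of a finite subfamily. -/
lemma lemA
    (hdcc : ¬ ∃ f : ℕ → Set L, (∀ m, ∃ X : Set L, f m = setCent X) ∧ ∀ m, f (m + 1) ⊂ f m)
    {ι : Type*} (g : ι → L) :
    ∃ s : Finset ι, setCent (g '' ↑s) ⊆ setCent (Set.range g) := by
  classical
  by_cases hmin : ∃ s : Finset ι, ∀ t : Finset ι, ¬ setCent (g '' ↑t) ⊂ setCent (g '' ↑s)
  · obtain ⟨s₀, hs₀⟩ := hmin
    refine ⟨s₀, ?_⟩
    intro y hy w hw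
    obtain ⟨i, rfl⟩ := hw
    have h1 : setCent (g '' ↑(insert i s₀)) ⊆ setCent (g '' ↑s₀) := by
      apply setCent_antitone
      apply Set.image_mono
      intro j hj
      simp only [Finset.coe_insert, Set.mem_insert_iff]
      exact Or.inr hj
    have h2 : setCent (g '' ↑s₀) ⊆ setCent (g '' ↑(insert i s₀)) := by
      by_contra hne
      exact hs₀ (insert i s₀) ⟨h1, hne⟩
    refine h2 hy (g i) ⟨i, ?_, rfl⟩
    simp
  · push_neg at hmin
    exfalso
    apply hdcc
    let F : ℕ → Finset ι := fun m => Nat.rec (∅ : Finset ι) (fun _ s => (hmin s).choose) m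
    refine ⟨fun m => setCent (g '' SetLike.coe (F m)), fun m => ⟨_, rfl⟩, fun m => ?_⟩
    exact (hmin (F m)).choose_spec

/-- The key construction step: if membership in `Z_n` is detected by finitely many
iterated brackets, then `Z_{n+1}` is a "centralizer modulo `Z_n`" of finitely many
elements. -/
lemma stepAux
    (hdcc : ¬ ∃ f : ℕ → Set L, (∀ m, ∃ X : Set L, f m = setCent X) ∧ ∀ m, f (m + 1) ⊂ f m)
    {n : ℕ} (T : List (List L))
    (hlen : ∀ τ ∈ T, τ.length = n)
    (hchar : ∀ z : L, z ∈ iterCenter L n ↔ ∀ τ ∈ T, itb z τ = 0) :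
    ∃ D : List L, ∀ y : L,
      y ∈ iterCenter L (n + 1) ↔ ∀ c ∈ D, ⁅y, c⁆ ∈ iterCenter L n := by
  classical
  obtain ⟨s, hs⟩ := lemA hdcc (ι := L × {τ : List L // τ ∈ T}) (fun p => itb p.1 p.2.1)
  refine ⟨T.flatten ++ s.toList.map Prod.fst, fun y => ?_⟩
  constructor
  · intro hy c _
    exact (mem_iter_succ n y).mp hy c
  · intro hy
    have hyE : ∀ τ ∈ T, ∀ a ∈ τ, ⁅y, a⁆ ∈ iterCenter L n := by
      intro τ hτ a ha
      exact hy a (List.mem_append_left _ (List.mem_flatten.mpr ⟨τ, hτ, ha⟩))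
    -- if `⁅y,x⁆ ∈ Z_n` then `y` kills all iterated brackets starting at `x`
    have hy0 : ∀ x : L, ⁅y, x⁆ ∈ iterCenter L n → ∀ τ ∈ T, ⁅y, itb x τ⁆ = 0 := by
      intro x hx τ hτ
      have h1 : itb ⁅y, x⁆ τ - ⁅y, itb x τ⁆ ∈ iterCenter L 0 :=
        key_congr τ (hyE τ hτ) x 0 (by rw [hlen τ hτ]; omega)
      have h2 : itb ⁅y, x⁆ τ = 0 := (hchar _).mp hx τ hτ
      rw [mem_iter_zero, h2, zero_sub, neg_eq_zero] at h1
      exact h1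
    have hyR : y ∈ setCent (Set.range fun p : L × {τ : List L // τ ∈ T} => itb p.1 p.2.1) := by
      apply hs
      intro w hw
      obtain ⟨p, hp, rfl⟩ := hw
      refine hy0 p.1 ?_ p.2.1 p.2.2
      refine hy p.1 (List.mem_append_right _ ?_)
      simp only [List.mem_map]
      exact ⟨p, by simpa using hp, rfl⟩
    rw [mem_iter_succ]
    intro x
    rw [hchar]
    intro τ hτ
    have h1 : itb ⁅y, x⁆ τ - ⁅y, itb x τ⁆ ∈ iterCenter L 0 :=
      key_congr τ (hyE τ hτ) x 0 (by rw [hlen τ hτ]; omega)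
    have h2 : ⁅y, itb x τ⁆ = 0 := hyR _ ⟨(x, ⟨τ, hτ⟩), rfl⟩
    rw [mem_iter_zero, h2, sub_zero] at h1
    exact h1

/-- Main induction: `Z_n` is detected by finitely many iterated bracket conditions. -/
lemma mainInd
    (hdcc : ¬ ∃ f : ℕ → Set L, (∀ m, ∃ X : Set L, f m = setCent X) ∧ ∀ m, f (m + 1) ⊂ f m) :
    ∀ n : ℕ, ∃ T : List (List L),
      (∀ τ ∈ T, τ.length = n) ∧ (∀ z : L, z ∈ iterCenter L n ↔ ∀ τ ∈ T, itb z τ = 0) := by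
  intro n
  induction n with
  | zero =>
    refine ⟨[[]], by simp, fun z => ?_⟩
    simp [mem_iter_zero]
  | succ n ih =>
    obtain ⟨T, hlen, hchar⟩ := ih
    obtain ⟨D, hD⟩ := stepAux hdcc T hlen hchar
    refine ⟨D.flatMap (fun c => T.map (c :: ·)), ?_, ?_⟩
    · intro τ hτ
      simp only [List.mem_flatMap, List.mem_map] at hτ
      obtain ⟨c, _, τ', hτ', rfl⟩ := hτ
      simp [hlen τ' hτ']
    · intro z
      rw [hD z]
      constructor
      · intro h τ hτ
        simp only [List.mem_flatMap, List.mem_map] at hτ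
        obtain ⟨c, hc, τ', hτ', rfl⟩ := hτ
        rw [itb_cons]
        exact (hchar _).mp (h c hc) τ' hτ'
      · intro h c hc
        rw [hchar]
        intro τ' hτ'
        have := h (c :: τ') (List.mem_flatMap.mpr ⟨c, hc, List.mem_map.mpr ⟨τ', hτ', rfl⟩⟩)
        rwa [itb_cons] at this

end Chain

/-- An `M_c` Lie ring is `Z_f`: for every iterated center `Z_n(L)`, the center
of `L ⧸ Z_n(L)` is the centralizer of finitely many elements. -/
theorem mc_isZf {L : Type*} [LieRing L] (hMc : IsMc L) (n : ℕ) :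
    ∃ (k : ℕ) (c : Fin k → L ⧸ iterCenter L n),
      {y : L ⧸ iterCenter L n | ∀ x : L ⧸ iterCenter L n, ⁅y, x⁆ = 0} =
        {y : L ⧸ iterCenter L n | ∀ i, ⁅y, c i⁆ = 0} := by
  classical
  obtain ⟨T, hlen, hchar⟩ := mainInd hMc.1 n
  obtain ⟨D, hD⟩ := stepAux hMc.1 T hlen hchar
  refine ⟨D.length, fun i => LieSubmodule.Quotient.mk (N := iterCenter L n) (D.get i), ?_⟩
  ext q
  obtain ⟨y, rfl⟩ := LieSubmodule.Quotient.surjective_mk' (N := iterCenter L n) q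
  simp only [Set.mem_setOf_eq]
  constructor
  · intro h i
    exact h _
  · intro h x'
    obtain ⟨x, rfl⟩ := LieSubmodule.Quotient.surjective_mk' (N := iterCenter L n) x'
    have hy : y ∈ iterCenter L (n + 1) := by
      rw [hD]
      intro c hc
      obtain ⟨i, rfl⟩ := List.mem_iff_get.mp hc
      have h2 := h i
      rw [show (LieSubmodule.Quotient.mk (N := iterCenter L n) (D.get i)) =
        LieSubmodule.Quotient.mk' (iterCenter L n) (D.get i) from rfl] at h2
      rw [show (⁅LieSubmodule.Quotient.mk' (iterCenter L n) y,
          LieSubmodule.Quotient.mk' (iterCenter L n) (D.get i)⁆ : L ⧸ iterCenter L n) =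
          LieSubmodule.Quotient.mk' (iterCenter L n) ⁅y, D.get i⁆ from rfl] at h2
      exact (LieSubmodule.Quotient.mk_eq_zero (iterCenter L n)).mp h2
    have := (mem_iter_succ n y).mp hy x
    rw [show (⁅LieSubmodule.Quotient.mk' (iterCenter L n) y,
        LieSubmodule.Quotient.mk' (iterCenter L n) x⁆ : L ⧸ iterCenter L n) =
        LieSubmodule.Quotient.mk' (iterCenter L n) ⁅y, x⁆ from rfl]
    exact (LieSubmodule.Quotient.mk_eq_zero (iterCenter L n)).mpr this
end

section
/- Let L be an abelian Lie ring acting on an abelian group V via a Lie ring homomorphism φ: L → End(V). Suppose C_V(L) = C_V(x_1,…,x_k) for elements x_1,…,x_k in L, and let v in V be such that for each i there is n_i with φ(x_i)^{n_i}(v)=0. Then φ(y_1)∘…∘φ(y_m)(v)=0 for all y_1,…,y_m in L, where m = 1 + Σ_{i=1}^k (n_i - 1). -/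
/-- Let `L` be an abelian Lie ring acting on an abelian group `V` via a Lie
ring homomorphism `φ : L → End V`, suppose `C_V(L) = C_V(x₁, …, x_k)` and let
`v ∈ V` satisfy `φ(x_i)^{n_i}(v) = 0` for each `i`.  Then every composite of
`m = 1 + Σ (n_i - 1)` operators `φ(y_j)` with `y_j ∈ L` kills `v`. -/
theorem semidirect_ad_nilpotent {L V : Type*} [LieRing L] [AddCommGroup V]
    (habel : ∀ x y : L, ⁅x, y⁆ = 0)
    (φ : L →+ AddMonoid.End V)
    (hφ : ∀ x y : L, φ ⁅x, y⁆ = φ x * φ y - φ y * φ x)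
    (k : ℕ) (x : Fin k → L)
    (hCent : {v : V | ∀ z : L, φ z v = 0} = {v : V | ∀ i, φ (x i) v = 0})
    (v : V) (n : Fin k → ℕ) (hn : ∀ i, ((φ (x i)) ^ (n i)) v = 0) :
    ∀ y : Fin (1 + ∑ i, (n i - 1)) → L,
      ((List.ofFn fun i => φ (y i)).prod : AddMonoid.End V) v = 0 := by
  have hcomm : ∀ a b : L, Commute (φ a) (φ b) := by
    intro a b
    have h := hφ a b
    rw [habel, map_zero] at h
    exact (sub_eq_zero.mp h.symm)
  have hlist : ∀ (a : L) (l : List L),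
      Commute (φ a) ((l.map fun z => φ z).prod) := by
    intro a l
    refine Commute.list_prod_right _ _ ?_
    intro b hb
    simp only [List.mem_map] at hb
    obtain ⟨c, -, rfl⟩ := hb
    exact hcomm a c
  -- membership in the centralizer of all x i gives centralizing of all of L
  have hC : ∀ u : V, (∀ i, φ (x i) u = 0) → ∀ z : L, φ z u = 0 := by
    intro u hu
    have : u ∈ {v : V | ∀ i, φ (x i) v = 0} := hu
    rw [← hCent] at this
    exact this
  -- nonempty products kill centralized vectors
  have hc0 : ∀ (u : V), (∀ z : L, φ z u = 0) → ∀ l : List L, l ≠ [] →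
      ((l.map fun z => φ z).prod) u = 0 := by
    intro u hu l hl
    induction l with
    | nil => exact absurd rfl hl
    | cons a t ih =>
      rcases eq_or_ne t ([] : List L) with rfl | ht
      · simpa using hu a
      · have h0 := ih ht
        have : ((List.map (fun z => φ z) (a :: t)).prod) u
            = φ a (((t.map fun z => φ z).prod) u) := rfl
        rw [this, h0, map_zero]
  -- main induction
  have aux : ∀ s : ℕ, ∀ (w : V) (m : Fin k → ℕ),
      (∀ i, ((φ (x i)) ^ (m i)) w = 0) → (∑ i, (m i - 1)) ≤ s →
      ∀ l : List L, 1 + s ≤ l.length → ((l.map fun z => φ z).prod) w = 0 := by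
    intro s
    induction s with
    | zero =>
      intro w m hm hsum l hl
      rcases l with _ | ⟨a, t⟩
      · simp at hl
      by_cases h0 : ∃ i, m i = 0
      · obtain ⟨i, hi⟩ := h0
        have hw : w = 0 := by simpa [hi] using hm i
        rw [hw, map_zero]
      · push_neg at h0
        have hmi : ∀ i, m i = 1 := by
          intro i
          have : m i - 1 = 0 := by
            have := Finset.sum_eq_zero_iff.mp (Nat.le_zero.mp hsum) i (Finset.mem_univ i)
            exact this
          have hne := h0 i
          omega
        have hw : ∀ i, φ (x i) w = 0 := by
          intro i
          have := hm i
          rwa [hmi i, pow_one] at this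
        exact hc0 w (hC w hw) _ (by simp)
    | succ s ih =>
      intro w m hm hsum l hl
      rcases l with _ | ⟨a, t⟩
      · simp at hl
      have htlen : 1 + s ≤ t.length := by
        have hlc : (a :: t).length = t.length + 1 := rfl
        rw [hlc] at hl
        omega
      set u : V := ((t.map fun z => φ z).prod) w with hu_def
      have hxi : ∀ i, φ (x i) u = 0 := by
        intro i
        have hswap : φ (x i) u = ((t.map fun z => φ z).prod) (φ (x i) w) := by
          have := hlist (x i) t
          calc φ (x i) u = (φ (x i) * (t.map fun z => φ z).prod) w := rfl
            _ = ((t.map fun z => φ z).prod * φ (x i)) w := by rw [this]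
            _ = ((t.map fun z => φ z).prod) (φ (x i) w) := rfl
        rcases Nat.lt_or_ge (m i) 2 with hlt | hge
        · -- m i = 0 or 1 : φ (x i) w = 0
          have hz : φ (x i) w = 0 := by
            rcases (show m i = 0 ∨ m i = 1 by omega) with hmi | hmi
            · have hw : w = 0 := by
                have := hm i; rw [hmi, pow_zero] at this; exact this
              rw [hw, map_zero]
            · have := hm i; rwa [hmi, pow_one] at this
          rw [hswap, hz, map_zero]
        · -- m i ≥ 2 : apply induction hypothesis to φ (x i) w
          set m' : Fin k → ℕ := Function.update m i (m i - 1) with hm'_def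
          have hm' : ∀ j, ((φ (x j)) ^ (m' j)) (φ (x i) w) = 0 := by
            intro j
            rcases eq_or_ne j i with rfl | hne
            · have : ((φ (x j)) ^ (m j - 1)) (φ (x j) w)
                  = ((φ (x j)) ^ (m j)) w := by
                have : (φ (x j)) ^ (m j) = (φ (x j)) ^ (m j - 1) * φ (x j) := by
                  conv_lhs => rw [show m j = (m j - 1) + 1 by omega]
                  rw [pow_succ]
                rw [this]; rfl
              simp only [hm'_def, Function.update_self]
              rw [this, hm j]
            · have hcom : Commute ((φ (x j)) ^ (m j)) (φ (x i)) :=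
                (hcomm (x j) (x i)).pow_left _
              simp only [hm'_def, Function.update_of_ne hne]
              calc ((φ (x j)) ^ (m j)) (φ (x i) w)
                  = ((φ (x j)) ^ (m j) * φ (x i)) w := rfl
                _ = (φ (x i) * (φ (x j)) ^ (m j)) w := by rw [hcom]
                _ = φ (x i) (((φ (x j)) ^ (m j)) w) := rfl
                _ = 0 := by rw [hm j, map_zero]
          have hsum' : (∑ j, (m' j - 1)) ≤ s := by
            have h1 : (∑ j, (m' j - 1))
                = (m i - 1 - 1) + ∑ j ∈ Finset.univ.erase i, (m j - 1) := by
              rw [← Finset.add_sum_erase _ _ (Finset.mem_univ i)]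
              congr 1
              · simp [hm'_def]
              · exact Finset.sum_congr rfl fun j hj => by
                  simp [hm'_def, Function.update_of_ne (Finset.ne_of_mem_erase hj)]
            have h2 : (∑ j, (m j - 1))
                = (m i - 1) + ∑ j ∈ Finset.univ.erase i, (m j - 1) := by
              rw [← Finset.add_sum_erase _ _ (Finset.mem_univ i)]
            rw [h2] at hsum
            rw [h1]
            omega
          have := ih (φ (x i) w) m' hm' hsum' t htlen
          rw [hswap, this]
      have hu : ∀ z : L, φ z u = 0 := hC u hxi
      have : ((List.map (fun z => φ z) (a :: t)).prod) w = φ a u := rfl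
      rw [this, hu a]
  intro y
  have key := aux (∑ i, (n i - 1)) v n hn le_rfl (List.ofFn y)
    (by simp)
  have heq : (List.ofFn fun i => φ (y i)) = ((List.ofFn y).map fun z => φ z) := by
    exact (List.map_ofFn (f := y) (g := fun z => φ z)).symm
  rw [heq]
  exact key
end

section
/- Let L be a Lie algebra over a field of characteristic zero, B an additive subgroup of L consisting of ad-nilpotent elements, and A a linear subspace of L. Then B ⊆ N_L(A) if and only if exp(ad_b)(A) = A for every b in B. -/
/-- The exponential of `ad b`, truncated at `n` (the correct value whenever
`(ad b)^n = 0`). -/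
noncomputable def expAd (K : Type*) {L : Type*} [Field K] [LieRing L]
    [LieAlgebra K L] (b : L) (n : ℕ) : L → L :=
  fun x => ∑ i ∈ Finset.range n,
    ((Nat.factorial i : K)⁻¹) • ((LieAlgebra.ad K L b) ^ i) x

lemma pow_mem_aux {K L : Type*} [Field K] [AddCommGroup L] [Module K L]
    (A : Submodule K L) (g : Module.End K L) (hg : ∀ a ∈ A, g a ∈ A) :
    ∀ i : ℕ, ∀ a ∈ A, (g ^ i) a ∈ A := by
  intro i
  induction i with
  | zero => intro a ha; simpa using ha
  | succ k ih =>
      intro a ha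
      rw [pow_succ, Module.End.mul_apply]
      exact ih _ (hg a ha)

lemma expAd_image {K L : Type*} [Field K] [CharZero K] [LieRing L]
    [LieAlgebra K L] (b : L) (A : Submodule K L)
    (hA : ∀ a ∈ A, ⁅b, a⁆ ∈ A) (n : ℕ)
    (hn : (LieAlgebra.ad K L b) ^ n = 0) :
    expAd K b n '' (A : Set L) = (A : Set L) := by
  set f := LieAlgebra.ad K L b with hf
  have hfA : ∀ a ∈ A, f a ∈ A := hA
  have hpow : ∀ i : ℕ, ∀ a ∈ A, (f ^ i) a ∈ A := pow_mem_aux A f hfA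
  rcases Nat.eq_zero_or_pos n with hn0 | hn1
  · -- degenerate case: `(ad b)^0 = 0` forces `L = 0`
    subst hn0
    have hzero : ∀ x : L, x = 0 := by
      intro x
      have : ((f ^ 0 : Module.End K L)) x = (0 : Module.End K L) x := by rw [hn]
      simpa using this
    ext x
    constructor
    · rintro ⟨a, ha, rfl⟩
      rw [hzero (expAd K b 0 a)]; exact A.zero_mem
    · intro hx
      refine ⟨x, hx, ?_⟩
      rw [hzero (expAd K b 0 x), hzero x]
  · -- `expAd b n = 1 + N` with `N` nilpotent, preserving `A`
    set N : Module.End K L := ∑ i ∈ Finset.Ico 1 n, ((Nat.factorial i : K)⁻¹) • f ^ i with hN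
    have hexp : ∀ x : L, expAd K b n x = x + N x := by
      intro x
      rw [expAd, Finset.range_eq_Ico, Finset.sum_eq_sum_Ico_succ_bot hn1]
      simp [hN, LinearMap.sum_apply]
      rfl
    have hNA : ∀ a ∈ A, N a ∈ A := by
      intro a ha
      rw [hN]
      simp only [LinearMap.sum_apply, LinearMap.smul_apply]
      exact A.sum_mem fun i _ => A.smul_mem _ (hpow i a ha)
    -- N is nilpotent
    have hNn : N ^ n = 0 := by
      set M : Module.End K L := ∑ i ∈ Finset.Ico 1 n, ((Nat.factorial i : K)⁻¹) • f ^ (i - 1) with hM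
      have hfM : N = f * M := by
        rw [hN, hM, Finset.mul_sum]
        refine Finset.sum_congr rfl fun i hi => ?_
        rw [Finset.mem_Ico] at hi
        rw [mul_smul_comm, ← pow_succ']
        congr 2
        omega
      have hcomm : Commute f M := by
        rw [hM]
        exact Commute.sum_right _ _ _ fun i _ =>
          (Commute.pow_right (Commute.refl f) _).smul_right _
      rw [hfM, hcomm.mul_pow, hn, zero_mul]
    -- inverse via geometric series
    set inv : Module.End K L := ∑ i ∈ Finset.range n, (-N) ^ i with hinv
    have hgeo : (1 + N) * inv = 1 := by
      have := mul_geom_sum (-N) n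
      rw [neg_pow, hNn, mul_zero, zero_sub] at this
      have h2 : -((-N - 1) * inv) = 1 := by rw [hinv] at *; rw [this]; exact neg_neg 1
      calc (1 + N) * inv = -((-N - 1) * inv) := by noncomm_ring
        _ = 1 := h2
    have hinvA : ∀ a ∈ A, inv a ∈ A := by
      intro a ha
      rw [hinv]
      simp only [LinearMap.sum_apply]
      refine A.sum_mem fun i _ => pow_mem_aux A (-N) ?_ i a ha
      intro x hx
      simpa using A.neg_mem (hNA x hx)
    ext x
    constructor
    · rintro ⟨a, ha, rfl⟩
      rw [hexp]
      exact A.add_mem ha (hNA a ha)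
    · intro hx
      refine ⟨inv x, hinvA x hx, ?_⟩
      rw [hexp]
      have : (1 + N) (inv x) = ((1 + N) * inv) x := rfl
      calc inv x + N (inv x) = (1 + N) (inv x) := by
            simp [LinearMap.add_apply]
        _ = ((1 + N) * inv) x := rfl
        _ = x := by rw [hgeo]; rfl

/-- Let `L` be a Lie algebra over a field of characteristic zero, `B` an
additive subgroup consisting of ad-nilpotent elements, and `A` a subspace.
Then `B ⊆ N_L(A)` iff `exp (ad b)` maps `A` onto `A` for every `b ∈ B`. -/
theorem normalizer_iff_expAd_fixes {K L : Type*} [Field K] [CharZero K]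
    [LieRing L] [LieAlgebra K L] (B : AddSubgroup L)
    (hB : ∀ b ∈ B, ∃ n : ℕ, (LieAlgebra.ad K L b) ^ n = 0)
    (A : Submodule K L) :
    (∀ b ∈ B, ∀ a ∈ A, ⁅b, a⁆ ∈ A) ↔
      (∀ b ∈ B, ∀ n : ℕ, (LieAlgebra.ad K L b) ^ n = 0 →
        expAd K b n '' (A : Set L) = (A : Set L)) := by
  constructor
  · intro h b hb n hn
    exact expAd_image b A (h b hb) n hn
  · intro h b hb a ha
    obtain ⟨n, hn⟩ := hB b hb
    set Nn := n + 2 with hNn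
    set f := LieAlgebra.ad K L b with hf
    have hfN : f ^ Nn = 0 := by
      rw [hNn, pow_add, hn, zero_mul]
    -- evaluate expAd at multiples m • b
    have hmb : ∀ m : ℕ, (LieAlgebra.ad K L (m • b)) ^ Nn = 0 := by
      intro m
      have had : LieAlgebra.ad K L (m • b) = m • LieAlgebra.ad K L b :=
        map_nsmul (LieAlgebra.ad K L) m b
      rw [had, smul_pow, hfN, smul_zero]
    have hmem : ∀ m : ℕ, expAd K (m • b) Nn a ∈ A := by
      intro m
      have himg := h (m • b) (B.nsmul_mem hb m) Nn (hmb m)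
      show expAd K (m • b) Nn a ∈ (A : Set L)
      rw [← himg]
      exact ⟨a, ha, rfl⟩
    -- rewrite expAd (m • b) as a Vandermonde combination
    have hval : ∀ m : ℕ, expAd K (m • b) Nn a
        = ∑ i : Fin Nn, ((m : K) ^ (i : ℕ)) •
            (((Nat.factorial (i : ℕ) : K)⁻¹) • (f ^ (i : ℕ)) a) := by
      intro m
      rw [expAd, ← Finset.sum_range fun i =>
        ((m : K) ^ i) • (((Nat.factorial i : K)⁻¹) • (f ^ i) a)]
      refine Finset.sum_congr rfl fun i _ => ?_
      have had : LieAlgebra.ad K L (m • b) = m • LieAlgebra.ad K L b :=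
        map_nsmul (LieAlgebra.ad K L) m b
      rw [had, smul_pow]
      have : ((m ^ i • f ^ i : Module.End K L)) a = m ^ i • ((f ^ i) a) := rfl
      rw [hf] at this ⊢
      rw [this, ← Nat.cast_smul_eq_nsmul K, smul_comm, Nat.cast_pow]
    set g : Fin Nn → L := fun i =>
      ((Nat.factorial (i : ℕ) : K)⁻¹) • (f ^ (i : ℕ)) a with hg
    have hwA : ∀ m : Fin Nn, (∑ i : Fin Nn, ((m : ℕ) : K) ^ (i : ℕ) • g i) ∈ A := by
      intro m
      have := hmem (m : ℕ)
      rwa [hval] at this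
    -- Vandermonde inversion
    set V : Matrix (Fin Nn) (Fin Nn) K :=
      Matrix.vandermonde (fun m : Fin Nn => ((m : ℕ) : K)) with hV
    have hdet : IsUnit V.det := by
      rw [hV, isUnit_iff_ne_zero, Ne, Matrix.det_vandermonde_eq_zero_iff]
      rintro ⟨i, j, hij, hne⟩
      exact hne (Fin.ext (Nat.cast_injective hij))
    have hkey : ∀ j : Fin Nn, g j ∈ A := by
      intro j
      have hempty : g j = ∑ m : Fin Nn, V⁻¹ j m •
          (∑ i : Fin Nn, ((m : ℕ) : K) ^ (i : ℕ) • g i) := by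
        have : ∀ m i : Fin Nn, V m i = ((m : ℕ) : K) ^ (i : ℕ) := by
          intro m i; rfl
        calc g j = ∑ i : Fin Nn, ((1 : Matrix (Fin Nn) (Fin Nn) K) j i) • g i := by
              simp [Matrix.one_apply]
          _ = ∑ i : Fin Nn, ((V⁻¹ * V) j i) • g i := by
              rw [Matrix.nonsing_inv_mul V hdet]
          _ = ∑ i : Fin Nn, (∑ m : Fin Nn, V⁻¹ j m * V m i) • g i := by
              simp [Matrix.mul_apply]
          _ = ∑ m : Fin Nn, ∑ i : Fin Nn, (V⁻¹ j m * V m i) • g i := by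
              rw [Finset.sum_comm]
              simp [Finset.sum_smul]
          _ = ∑ m : Fin Nn, V⁻¹ j m •
              (∑ i : Fin Nn, ((m : ℕ) : K) ^ (i : ℕ) • g i) := by
              refine Finset.sum_congr rfl fun m _ => ?_
              rw [Finset.smul_sum]
              exact Finset.sum_congr rfl fun i _ => by rw [mul_smul, this]
      rw [hempty]
      exact A.sum_mem fun m _ => A.smul_mem _ (hwA m)
    have h1 : g ⟨1, by omega⟩ ∈ A := hkey _
    have : g ⟨1, by omega⟩ = ⁅b, a⁆ := by
      have h1mod : 1 % Nn = 1 := Nat.mod_eq_of_lt (by omega)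
      simp [hg, hf, Nat.factorial, h1mod]
    rwa [this] at h1
end
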